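/- For the 5-agent system ẋ₁ = q(x₃) - x₁, ẋ₂ = q(x₃) - x₂, ẋ₃ = q(x₁) + q(x₂) + q(x₄) - 3x₃, ẋ₄ = q(x₃) + q(x₅) - 2x₄, ẋ₅ = q(x₄) - x₅, the point x̄ = (0, 0, 1/3, 1/2, 1) satisfies f(x̄) = 0, i.e., it is a Carathéodory equilibrium, and it is not a consensus point. -/

import Mathlib

noncomputable def q (s : ℝ) : ℤ := ⌊s + 1/2⌋

/-- The 5-agent vector field. -/
noncomputable def f (x : Fin 5 → ℝ) : Fin 5 → ℝ :=
  ![ (q (x 2) : ℝ) - x 0,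
     (q (x 2) : ℝ) - x 1,
     (q (x 0) : ℝ) + (q (x 1) : ℝ) + (q (x 3) : ℝ) - 3 * x 2,
     (q (x 2) : ℝ) + (q (x 4) : ℝ) - 2 * x 3,
     (q (x 3) : ℝ) - x 4 ]

noncomputable def xbar : Fin 5 → ℝ := ![0, 0, 1/3, 1/2, 1]

theorem q_eq_of_le_of_lt {s : ℝ} {k : ℤ} (hle : k - 1/2 ≤ s) (hlt : s < k + 1/2) : q s = k := by
  rw [q, Int.floor_eq_iff]
  constructor <;> linarith

theorem q_zero : q 0 = 0 := q_eq_of_le_of_lt (by norm_num) (by norm_num)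

theorem q_one_third : q (1/3) = 0 := q_eq_of_le_of_lt (by norm_num) (by norm_num)

/- `xbar 3 = 1/2` sits on a jump of `q`: `xbar` is an equilibrium only because `q` rounds
half up. -/
theorem q_half : q (1/2) = 1 := q_eq_of_le_of_lt (by norm_num) (by norm_num)

theorem q_one : q 1 = 1 := q_eq_of_le_of_lt (by norm_num) (by norm_num)

theorem nonconsensus_Caratheodory_equilibrium :
    f xbar = 0 ∧ ¬ (∀ i j : Fin 5, xbar i = xbar j) := by
  refine ⟨?_, fun hcons => by simpa [xbar] using hcons 0 4⟩
  funext i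
  fin_cases i <;> simp only [f, xbar, Matrix.cons_val, Matrix.cons_val_zero, Matrix.cons_val_one] <;>
    norm_num [q_zero, q_one_third, q_half, q_one]
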